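/- arXiv:math/0104122 — 9 statements merged into one kernel-verified Lean document; each statement's English description precedes it below -/
import Mathlib

section
/- Let A be a commutative associative algebra over a field of characteristic 0, and let {·,...,·} be an n-linear bracket on A satisfying the Leibniz rule in each argument. If one replaces an argument f_i (for i ≤ n-1) in the Filippov identity by f_i²/2 and subtracts f_i times the Filippov identity, one obtains the identity: ∑_{k=1}^n {f_1,...,f_{n-1},g_k}·{g_1,...,g_{k-1},f_i,g_{k+1},...,g_n} = 0 for all f_1,...,f_{n-1},g_1,...,g_n ∈ A and all i = 1,...,n-1. -/
/-!
Substituting `fᵢ²` for `fᵢ` doubles every bracket in which `fᵢ` sits, up to the factor `fᵢ`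
(Leibniz rule). Applying the Filippov identity to the substituted arguments and expanding the
right-hand side once more by the Leibniz rule reproduces `2 fᵢ` times the original identity,
plus twice the sum in question; since `2` is invertible, that sum vanishes.
-/

open Function

namespace MultilinearMap

variable {K A ι : Type*} [Field K] [CommRing A] [Algebra K A] [DecidableEq ι]
  {br : MultilinearMap K (fun _ : ι => A) A}

theorem map_update_mul_self_of_leibniz
    (hLeib : ∀ (f : ι → A) (i : ι) (x y : A),
      br (update f i (x * y)) = x * br (update f i y) + br (update f i x) * y)
    (f : ι → A) (i : ι) (x : A) :
    br (update f i (x * x)) = (2 : K) • (x * br (update f i x)) := by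
  rw [hLeib, two_smul, mul_comm (br _)]

theorem map_update_update_mul_self_of_leibniz
    (hLeib : ∀ (f : ι → A) (i : ι) (x y : A),
      br (update f i (x * y)) = x * br (update f i y) + br (update f i x) * y)
    (f : ι → A) {i j : ι} (hij : i ≠ j) (y : A) :
    br (update (update f i (f i * f i)) j y) = (2 : K) • (f i * br (update f j y)) := by
  calc br (update (update f i (f i * f i)) j y)
      = br (update (update f j y) i (f i * f i)) := by rw [update_comm hij]
    _ = (2 : K) • (f i * br (update (update f j y) i (f i))) :=
      map_update_mul_self_of_leibniz hLeib _ _ _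
    _ = (2 : K) • (f i * br (update f j y)) := by
      rw [update_eq_self_iff.mpr (update_of_ne hij y f).symm]

theorem sum_map_update_mul_map_update_eq_zero [Fintype ι] [NeZero (2 : K)]
    (hLeib : ∀ (f : ι → A) (i : ι) (x y : A),
      br (update f i (x * y)) = x * br (update f i y) + br (update f i x) * y)
    {j : ι}
    (hFil : ∀ (f g : ι → A),
      br (update f j (br g)) = ∑ k, br (update g k (br (update f j (g k)))))
    (f g : ι → A) {i : ι} (hij : i ≠ j) :
    ∑ k, br (update f j (g k)) * br (update g k (f i)) = 0 := by
  have expand : ∀ k, br (update g k ((2 : K) • (f i * br (update f j (g k))))) =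
      (2 : K) • (f i * br (update g k (br (update f j (g k))))) +
        (2 : K) • (br (update f j (g k)) * br (update g k (f i))) := by
    intro k
    rw [br.map_update_smul, hLeib, smul_add, mul_comm (br (update g k (f i)))]
  have H := hFil (update f i (f i * f i)) g
  simp only [map_update_update_mul_self_of_leibniz hLeib f hij, expand, Finset.sum_add_distrib,
    ← Finset.smul_sum, ← Finset.mul_sum, ← hFil, left_eq_add] at H
  exact (smul_eq_zero.mp H).resolve_left two_ne_zero

end MultilinearMap

/-- For an `n`-linear bracket on a commutative associative algebra `A`
over a field of characteristic 0 satisfying the Leibniz rule in each argument and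
the Filippov identity, the identity
`∑ₖ {f₁,…,f_{n-1},g_k}·{g₁,…,g_{k-1},f_i,g_{k+1},…,g_n} = 0`
holds for all arguments and all `i = 1,…,n-1`. Here the arity is `n + 1`. -/
theorem stmt0 {K A : Type*} [Field K] [CharZero K] [CommRing A] [Algebra K A]
    (n : ℕ) (br : MultilinearMap K (fun _ : Fin (n + 1) => A) A)
    (hLeib : ∀ (f : Fin (n + 1) → A) (i : Fin (n + 1)) (x y : A),
      br (Function.update f i (x * y)) =
        x * br (Function.update f i y) + br (Function.update f i x) * y)
    (hFil : ∀ (f g : Fin (n + 1) → A),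
      br (Function.update f (Fin.last n) (br g)) =
        ∑ k : Fin (n + 1),
          br (Function.update g k (br (Function.update f (Fin.last n) (g k))))) :
    ∀ (f g : Fin (n + 1) → A) (i : Fin (n + 1)), i ≠ Fin.last n →
      ∑ k : Fin (n + 1),
        br (Function.update f (Fin.last n) (g k)) * br (Function.update g k (f i)) = 0 :=
  fun f g _ hi => MultilinearMap.sum_map_update_mul_map_update_eq_zero (K := K) hLeib hFil f g hi
end

section
/- Let A be a commutative associative reduced algebra (no nonzero nilpotents) over a field of characteristic 0, and let {·,·} be a bilinear bracket on A satisfying the Leibniz rule in each argument and the Jacobi identity {f,{g,h}} = {{f,g},h} + {g,{f,h}}. Then {h,h} = 0 for all h ∈ A, and consequently the bracket is skew-symmetric: {f,g} = -{g,f}. -/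
/-- A bilinear bracket on a commutative associative reduced algebra over a
field of characteristic 0, satisfying the Leibniz rule in each argument and the Loday-type
Jacobi identity, satisfies `{h,h} = 0` for all `h` and is skew-symmetric. -/
theorem stmt1 {K A : Type*} [Field K] [CharZero K] [CommRing A] [Algebra K A] [IsReduced A]
    (br : A →ₗ[K] A →ₗ[K] A)
    (hL1 : ∀ f g h : A, br (f * g) h = f * br g h + br f h * g)
    (hL2 : ∀ f g h : A, br f (g * h) = g * br f h + br f g * h)
    (hJ : ∀ f g h : A, br f (br g h) = br (br f g) h + br g (br f h)) :
    (∀ h : A, br h h = 0) ∧ (∀ f g : A, br f g = - br g f) := by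
  have hzero : ∀ h : A, br h h = 0 := by
    intro h
    set a := br h h with ha
    -- from Jacobi with (h,h,h): br a h = 0
    have J1 := hJ h h h
    have e1 : br a h = 0 := by linear_combination -J1
    have E1 : br (h * h) h = h * a + a * h := hL1 h h h
    have E2 : br (h * h) a = h * br h a + br h a * h := hL1 h h a
    have key := hJ (h * h) h h
    rw [← ha, E2, E1] at key
    have A1 : br (h * a + a * h) h = br (h * a) h + br (a * h) h := by
      simp [map_add]
    have A2 : br h (h * a + a * h) = br h (h * a) + br h (a * h) := map_add _ _ _
    have B1 : br (h * a) h = h * br a h + br h h * a := hL1 h a h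
    have B2 : br (a * h) h = a * br h h + br a h * h := hL1 a h h
    have C1 : br h (h * a) = h * br h a + br h h * a := hL2 h h a
    have C2 : br h (a * h) = a * br h h + br h a * h := hL2 h a h
    rw [A1, A2, B1, B2, C1, C2, e1, ← ha] at key
    have h4 : (4 : A) * (a * a) = 0 := by linear_combination -key
    have hs : (4 : K) • (a * a) = 0 := by
      rw [Algebra.smul_def, map_ofNat]; exact h4
    have hsq : a * a = 0 := by
      have h' := congrArg (fun x => (4 : K)⁻¹ • x) hs
      simpa [smul_smul, inv_mul_cancel₀ (by norm_num : (4 : K) ≠ 0)] using h'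
    exact IsNilpotent.eq_zero ⟨2, by rw [pow_two]; exact hsq⟩
  refine ⟨hzero, fun f g => ?_⟩
  have h0 := hzero (f + g)
  simp only [map_add, LinearMap.add_apply] at h0
  linear_combination h0 - hzero f - hzero g
end

section
/- Let A be a commutative associative reduced algebra over a field of characteristic 0 with a bilinear bracket satisfying the Leibniz rule in each argument and the Jacobi identity {f,{g,h}} = {{f,g},h} + {g,{f,h}}. Then {h,h}² = 0 for all h ∈ A (so {h,h} = 0 by reducedness). -/
/-- A bilinear bracket on a commutative associative reduced algebra over a
field of characteristic 0, satisfying the Leibniz rule in each argument and the Loday-type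
Jacobi identity, satisfies `{h,h}² = 0` for all `h` (so `{h,h} = 0` by reducedness). -/
theorem stmt2 {K A : Type*} [Field K] [CharZero K] [CommRing A] [Algebra K A] [IsReduced A]
    (br : A →ₗ[K] A →ₗ[K] A)
    (hL1 : ∀ f g h : A, br (f * g) h = f * br g h + br f h * g)
    (hL2 : ∀ f g h : A, br f (g * h) = g * br f h + br f g * h)
    (hJ : ∀ f g h : A, br f (br g h) = br (br f g) h + br g (br f h)) :
    ∀ h : A, br h h ^ 2 = 0 ∧ br h h = 0 := by
  intro h
  have h1 : br (br h h) h = 0 := by linear_combination -(hJ h h h)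
  have e2 : br (h * h) h = h * br h h + br h h * h := hL1 h h h
  have big := hJ (h * h) h h
  rw [e2, map_add, LinearMap.add_apply, map_add] at big
  have a1 := hL1 h (br h h) h
  have a2 := hL1 (br h h) h h
  have a3 := hL2 h h (br h h)
  have a4 := hL2 h (br h h) h
  have a5 := hL1 h h (br h h)
  have key : (4 : K) • (br h h ^ 2) = 0 := by
    rw [Algebra.smul_def, map_ofNat]
    linear_combination a5 - big - a1 - a2 - a3 - a4 - 2 * h * h1
  have sq : br h h ^ 2 = 0 :=
    (smul_eq_zero.mp key).resolve_left (by norm_num)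
  exact ⟨sq, IsReduced.eq_zero _ ⟨2, sq⟩⟩
end

section
/- In the commutative algebra A = k[x,y]/⟨x²⟩ over a field k, the bracket {f,g} = x·(∂f/∂y)·(∂g/∂y) is bilinear, satisfies the Leibniz rule in each argument, satisfies the Jacobi identity {f,{g,h}} = {{f,g},h} + {g,{f,h}}, and is symmetric (hence not skew-symmetric, e.g. {y,y} = x ≠ 0). -/
open MvPolynomial

set_option maxHeartbeats 2000000 in
/-- On `A = k[x,y]/⟨x²⟩` (with `x = X 0`, `y = X 1`), the bilinear bracket
induced by `{f,g} = x·(∂f/∂y)·(∂g/∂y)` satisfies the Leibniz rule in each argument and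
the Loday-Jacobi identity, and it is symmetric but not skew-symmetric: `{y,y} = x ≠ 0`. -/
theorem stmt4 {k : Type*} [Field k] [CharZero k]
    (I : Ideal (MvPolynomial (Fin 2) k)) (hI : I = Ideal.span {(X 0 : MvPolynomial (Fin 2) k) ^ 2})
    (br : (MvPolynomial (Fin 2) k ⧸ I) →ₗ[k] (MvPolynomial (Fin 2) k ⧸ I) →ₗ[k]
      (MvPolynomial (Fin 2) k ⧸ I))
    (hbr : ∀ p q : MvPolynomial (Fin 2) k,
      br (Ideal.Quotient.mk I p) (Ideal.Quotient.mk I q) =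
        Ideal.Quotient.mk I (X 0 * pderiv 1 p * pderiv 1 q)) :
    (∀ f g h, br (f * g) h = f * br g h + br f h * g) ∧
    (∀ f g h, br f (g * h) = g * br f h + br f g * h) ∧
    (∀ f g h, br f (br g h) = br (br f g) h + br g (br f h)) ∧
    (∀ f g, br f g = br g f) ∧
    br (Ideal.Quotient.mk I (X 1)) (Ideal.Quotient.mk I (X 1)) = Ideal.Quotient.mk I (X 0) ∧
    (Ideal.Quotient.mk I (X 0) : MvPolynomial (Fin 2) k ⧸ I) ≠ 0 := by
  have hzero : ∀ a : MvPolynomial (Fin 2) k,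
      (X 0 : MvPolynomial (Fin 2) k) ^ 2 ∣ a → Ideal.Quotient.mk I a = 0 := by
    intro a ha
    rw [Ideal.Quotient.eq_zero_iff_mem, hI, Ideal.mem_span_singleton]
    exact ha
  have hdX : pderiv (R := k) 1 (X 0 : MvPolynomial (Fin 2) k) = 0 := by
    rw [pderiv_X_of_ne]; decide
  refine ⟨?_, ?_, ?_, ?_, ?_, ?_⟩
  · intro f g h
    obtain ⟨p, rfl⟩ := Ideal.Quotient.mk_surjective f
    obtain ⟨q, rfl⟩ := Ideal.Quotient.mk_surjective g
    obtain ⟨r, rfl⟩ := Ideal.Quotient.mk_surjective h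
    rw [← map_mul, hbr, hbr, hbr, ← map_mul, ← map_mul, ← map_add]
    congr 1
    rw [pderiv_mul]; ring
  · intro f g h
    obtain ⟨p, rfl⟩ := Ideal.Quotient.mk_surjective f
    obtain ⟨q, rfl⟩ := Ideal.Quotient.mk_surjective g
    obtain ⟨r, rfl⟩ := Ideal.Quotient.mk_surjective h
    rw [← map_mul, hbr, hbr, hbr, ← map_mul, ← map_mul, ← map_add]
    congr 1
    rw [pderiv_mul]; ring
  · intro f g h
    obtain ⟨p, rfl⟩ := Ideal.Quotient.mk_surjective f
    obtain ⟨q, rfl⟩ := Ideal.Quotient.mk_surjective g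
    obtain ⟨r, rfl⟩ := Ideal.Quotient.mk_surjective h
    rw [hbr, hbr, hbr, hbr, hbr, hbr]
    have key : ∀ a b c : MvPolynomial (Fin 2) k,
        Ideal.Quotient.mk I (X 0 * pderiv 1 a * pderiv 1 (X 0 * b * c)) = 0 := by
      intro a b c
      apply hzero
      rw [pderiv_mul, pderiv_mul, hdX]
      exact ⟨pderiv 1 a * (pderiv 1 b * c + b * pderiv 1 c), by ring⟩
    have key' : ∀ a b c : MvPolynomial (Fin 2) k,
        Ideal.Quotient.mk I (X 0 * pderiv 1 (X 0 * a * b) * pderiv 1 c) = 0 := by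
      intro a b c
      apply hzero
      rw [pderiv_mul, pderiv_mul, hdX]
      exact ⟨(pderiv 1 a * b + a * pderiv 1 b) * pderiv 1 c, by ring⟩
    rw [key, key, key']
    simp
  · intro f g
    obtain ⟨p, rfl⟩ := Ideal.Quotient.mk_surjective f
    obtain ⟨q, rfl⟩ := Ideal.Quotient.mk_surjective g
    rw [hbr, hbr]
    congr 1
    ring
  · rw [hbr]
    congr 1
    simp
  · intro h0
    have : (X 0 : MvPolynomial (Fin 2) k) ^ 2 ∣ X 0 := by
      rw [← Ideal.mem_span_singleton, ← hI, ← Ideal.Quotient.eq_zero_iff_mem]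
      exact h0
    have h2 : (Polynomial.X : Polynomial k) ^ 2 ∣ Polynomial.X := by
      have := map_dvd (aeval (fun i : Fin 2 => if i = 0 then (Polynomial.X : Polynomial k) else 0)) this
      simpa using this
    rw [Polynomial.X_pow_dvd_iff] at h2
    have := h2 1 (by norm_num)
    simp at this
end

section
/- In the algebra A = k[x,y]/⟨x²⟩, the symmetric bracket {f,g} = x·(∂f/∂y)·(∂g/∂y) satisfies {h,h} ≠ 0 for h = y, showing that the hypothesis that A has no nilpotents cannot be dropped from the statement that every Nambu-Loday (Poisson-Loday) bracket is skew-symmetric. -/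
open MvPolynomial

lemma aux_not_mem {k : Type*} [Field k] [CharZero k] :
    (X 0 : MvPolynomial (Fin 2) k) ∉
      Ideal.span {(X 0 : MvPolynomial (Fin 2) k) ^ 2} := by
  rw [Ideal.mem_span_singleton]
  rintro ⟨c, hc⟩
  have h := congrArg (fun p => eval (fun _ => (0 : k)) (pderiv 0 p)) hc
  simp [pderiv_mul, pderiv_pow] at h

/-- In `A = k[x,y]/⟨x²⟩`, the symmetric bracket induced by
`{f,g} = x·(∂f/∂y)·(∂g/∂y)` satisfies `{h,h} ≠ 0` for `h = y`; moreover `A` has a nonzero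
nilpotent (the class of `x`), showing the no-nilpotents hypothesis cannot be dropped from
the theorem that every Nambu-Loday bracket is skew-symmetric. -/
theorem stmt5 {k : Type*} [Field k] [CharZero k]
    (I : Ideal (MvPolynomial (Fin 2) k)) (hI : I = Ideal.span {(X 0 : MvPolynomial (Fin 2) k) ^ 2})
    (br : (MvPolynomial (Fin 2) k ⧸ I) →ₗ[k] (MvPolynomial (Fin 2) k ⧸ I) →ₗ[k]
      (MvPolynomial (Fin 2) k ⧸ I))
    (hbr : ∀ p q : MvPolynomial (Fin 2) k,
      br (Ideal.Quotient.mk I p) (Ideal.Quotient.mk I q) =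
        Ideal.Quotient.mk I (X 0 * pderiv 1 p * pderiv 1 q)) :
    br (Ideal.Quotient.mk I (X 1)) (Ideal.Quotient.mk I (X 1)) ≠ 0 ∧
    ∃ a : MvPolynomial (Fin 2) k ⧸ I, a ≠ 0 ∧ a ^ 2 = 0 := by
  have hx : Ideal.Quotient.mk I (X 0 : MvPolynomial (Fin 2) k) ≠ 0 := by
    rw [Ne, Ideal.Quotient.eq_zero_iff_mem, hI]
    exact aux_not_mem
  refine ⟨?_, Ideal.Quotient.mk I (X 0), hx, ?_⟩
  · rw [hbr]
    simp only [pderiv_X_self, mul_one]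
    exact hx
  · rw [← map_pow, Ideal.Quotient.eq_zero_iff_mem, hI]
    exact Ideal.subset_span rfl
end

section
/- Let A be a commutative associative reduced algebra over a field of characteristic 0 equipped with an n-linear bracket satisfying the Leibniz rule in each argument and the Filippov identity. Then the bracket vanishes whenever two of its arguments are equal; in particular, the bracket is totally skew-symmetric (alternating). -/
/-!
Write `{f}` for the bracket and take the last slot as a pivot. For `g = f` the term `k = last`
of the Filippov identity cancels its left side, leaving `∑_{k ≠ last} {f[k := {f[last := f k]}]}
= 0`. Applying this to `f[j := (f j)²]` and expanding with Leibniz yields `f j · crossSum = 0`;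
since brackets kill constants, `crossSum` is invariant under `f j ↦ f j + 1`, so `crossSum = 0`.
If `f j = f last`, every term of `crossSum` is either `{f}²` or a bracket in which one more slot
agrees with the last one. By induction on the number of slots that disagree with the last one,
the latter vanish, so `(4c + 8) {f}² = 0` for some `c : ℕ`, and `{f} = 0` because `A` is a
reduced `ℚ`-algebra.
Polarization then gives vanishing for any pair of equal slots.
-/

open Function Finset

theorem eq_zero_of_natCast_mul_sq_eq_zero (K : Type*) {A : Type*} [Field K] [CharZero K]
    [CommRing A] [Algebra K A] [IsReduced A] {m : ℕ} (hm : m ≠ 0) {a : A}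
    (h : (m : A) * a ^ 2 = 0) : a = 0 := by
  have hu : IsUnit (m : A) := by
    simpa using (IsUnit.mk0 (m : K) (Nat.cast_ne_zero.mpr hm)).map (algebraMap K A)
  exact eq_zero_of_pow_eq_zero (hu.mul_right_eq_zero.mp h)

namespace MultilinearMap

section Polarization

variable {R M N ι : Type*} [Semiring R] [AddCommMonoid M] [AddCommGroup N] [Module R M]
  [Module R N] [DecidableEq ι] (m : MultilinearMap R (fun _ : ι => M) N)

theorem map_swap_of_map_eq_zero_of_eq {i j : ι} (hij : i ≠ j)
    (h : ∀ v : ι → M, v i = v j → m v = 0) (v : ι → M) :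
    m (v ∘ Equiv.swap i j) = -m v := by
  have h0 := h (update (update v i (v i + v j)) j (v i + v j)) (by simp [hij])
  rw [m.map_update_add, update_comm hij _ (v i) v, update_comm hij _ (v j) v, m.map_update_add,
    m.map_update_add, h (update (update v j (v i)) i (v i)) (by simp [hij.symm]),
    h (update (update v j (v j)) i (v j)) (by simp [hij.symm]), update_eq_self, update_eq_self,
    ← Equiv.comp_swap_eq_update, zero_add, add_zero] at h0
  exact eq_neg_of_add_eq_zero_left h0

theorem map_eq_zero_of_eq_of_pivot (p : ι) (h : ∀ v i, i ≠ p → v i = v p → m v = 0)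
    {v : ι → M} {i j : ι} (hij : i ≠ j) (hv : v i = v j) : m v = 0 := by
  by_cases hj : j = p
  · subst hj
    exact h v i hij hv
  by_cases hi : i = p
  · subst hi
    exact h v j hij.symm hv.symm
  rw [← neg_neg (m v), ← m.map_swap_of_map_eq_zero_of_eq hj (h · j hj), h _ i hi, neg_zero]
  simp [Equiv.swap_apply_of_ne_of_ne hij hi, hv]

end Polarization

section Leibniz

variable {R A ι : Type*} [Semiring R] [CommRing A] [Module R A] [DecidableEq ι]
  {br : MultilinearMap R (fun _ : ι => A) A}

def IsLeibniz (br : MultilinearMap R (fun _ : ι => A) A) : Prop :=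
  ∀ (f : ι → A) (i : ι) (x y : A),
    br (update f i (x * y)) = x * br (update f i y) + br (update f i x) * y

namespace IsLeibniz

variable (hL : br.IsLeibniz) (f : ι → A) (i : ι)
include hL

theorem map_update_mul (x y : A) :
    br (update f i (x * y)) = x * br (update f i y) + y * br (update f i x) := by
  rw [hL f i x y, mul_comm y]

theorem map_update_one : br (update f i 1) = 0 := by
  simpa using hL f i 1 1

theorem map_update_add_one (x : A) : br (update f i (x + 1)) = br (update f i x) := by
  rw [br.map_update_add, hL.map_update_one, add_zero]

end IsLeibniz

end Leibniz

section Filippov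

variable {R A : Type*} [Semiring R] [CommRing A] [Module R A] {n : ℕ}
  {br : MultilinearMap R (fun _ : Fin (n + 1) => A) A}

def IsFilippov (br : MultilinearMap R (fun _ : Fin (n + 1) => A) A) : Prop :=
  ∀ f g : Fin (n + 1) → A,
    br (update f (Fin.last n) (br g)) =
      ∑ k, br (update g k (br (update f (Fin.last n) (g k))))

theorem IsFilippov.sum_erase_last_eq_zero (hF : br.IsFilippov) (f : Fin (n + 1) → A) :
    ∑ k ∈ univ.erase (Fin.last n), br (update f k (br (update f (Fin.last n) (f k)))) = 0 := by
  have h := hF f f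
  rwa [← sum_erase_add _ _ (mem_univ (Fin.last n)), update_eq_self, right_eq_add] at h

def crossSum (br : MultilinearMap R (fun _ : Fin (n + 1) => A) A) (f : Fin (n + 1) → A)
    (j : Fin (n + 1)) : A :=
  ∑ k ∈ (univ.erase (Fin.last n)).erase j,
      br (update f (Fin.last n) (f k)) * br (update f k (f j)) +
    2 * (br (update f (Fin.last n) (f j)) * br f)

variable (hL : br.IsLeibniz)
include hL

theorem crossSum_update_add_one (f : Fin (n + 1) → A) {j : Fin (n + 1)} (hj : j ≠ Fin.last n) :
    crossSum br (update f j (f j + 1)) j = crossSum br f j := by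
  have hshift : ∀ k, j ≠ k → ∀ v,
      br (update (update f j (f j + 1)) k v) = br (update f k v) := by
    intro k hjk v
    rw [update_comm hjk, ← update_of_ne hjk v f, hL.map_update_add_one, update_eq_self]
  unfold crossSum
  rw [update_self, hshift _ hj, hL.map_update_add_one, hL.map_update_add_one, update_eq_self]
  refine congrArg (· + _) (sum_congr rfl fun k hk => ?_)
  have hkj : k ≠ j := (mem_erase.mp hk).1
  rw [update_of_ne hkj, hshift _ hj, hshift _ hkj.symm, hL.map_update_add_one]

variable (hF : br.IsFilippov)
include hF

theorem mul_crossSum_eq_zero (f : Fin (n + 1) → A) {j : Fin (n + 1)} (hj : j ≠ Fin.last n) :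
    4 * (f j * crossSum br f j) = 0 := by
  set g := update f j (f j * f j)
  have hsq : ∀ k, j ≠ k → ∀ v, br (update g k v) =
      f j * br (update f k v) + f j * br (update f k v) := by
    intro k hjk v
    rw [update_comm hjk, hL.map_update_mul,
      update_eq_self_iff.mpr (update_of_ne hjk v f).symm]
  have hj' : j ∈ univ.erase (Fin.last n) := mem_erase.mpr ⟨hj, mem_univ j⟩
  have hSf := hF.sum_erase_last_eq_zero f
  have hSg := hF.sum_erase_last_eq_zero g
  rw [← sum_erase_add _ _ hj'] at hSf hSg
  have hTj : br (update g j (br (update g (Fin.last n) (g j)))) =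
      4 * (f j * f j) * br (update f j (br (update f (Fin.last n) (f j)))) +
        8 * (f j * (br (update f (Fin.last n) (f j)) * br f)) := by
    rw [update_idem, show g j = f j * f j from update_self .., hsq _ hj,
      hL.map_update_mul f (Fin.last n)]
    simp only [br.map_update_add, hL.map_update_mul, update_eq_self]
    ring
  have hTk : ∀ k ∈ (univ.erase (Fin.last n)).erase j,
      br (update g k (br (update g (Fin.last n) (g k)))) =
        4 * (f j * f j) * br (update f k (br (update f (Fin.last n) (f k)))) +
          4 * f j * (br (update f (Fin.last n) (f k)) * br (update f k (f j))) := by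
    intro k hk
    have hkj : k ≠ j := (mem_erase.mp hk).1
    rw [show g k = f k from update_of_ne hkj .., hsq _ hj, hsq _ hkj.symm]
    simp only [br.map_update_add, hL.map_update_mul]
    ring
  rw [sum_congr rfl hTk, hTj, sum_add_distrib, ← mul_sum, ← mul_sum] at hSg
  unfold crossSum
  linear_combination hSg - 4 * (f j * f j) * hSf

theorem crossSum_eq_zero (f : Fin (n + 1) → A) {j : Fin (n + 1)} (hj : j ≠ Fin.last n) :
    4 * crossSum br f j = 0 := by
  have h := mul_crossSum_eq_zero hL hF f hj
  have h' := mul_crossSum_eq_zero hL hF (update f j (f j + 1)) hj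
  rw [update_self, crossSum_update_add_one hL f hj] at h'
  linear_combination h' - h

end Filippov

section NambuLoday

variable {K A : Type*} [Field K] [CharZero K] [CommRing A] [Algebra K A] [IsReduced A] {n : ℕ}
  {br : MultilinearMap K (fun _ : Fin (n + 1) => A) A} (hL : br.IsLeibniz) (hF : br.IsFilippov)
include hL hF

theorem map_eq_zero_of_forall_map_update_last (f : Fin (n + 1) → A) {j : Fin (n + 1)}
    (hj : j ≠ Fin.last n) (hfj : f j = f (Fin.last n))
    (hbad : ∀ k, k ≠ Fin.last n → f k ≠ f (Fin.last n) →
      br (update f k (f (Fin.last n))) = 0) :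
    br f = 0 := by
  classical
  have h := crossSum_eq_zero hL hF f hj
  have hterm : ∀ k ∈ (univ.erase (Fin.last n)).erase j,
      br (update f (Fin.last n) (f k)) * br (update f k (f j)) =
        if f k = f (Fin.last n) then br f * br f else 0 := by
    intro k hk
    split_ifs with hku
    · have hlast : br (update f (Fin.last n) (f k)) = br f := by rw [hku, update_eq_self]
      have hslot : br (update f k (f j)) = br f := by rw [hfj, ← hku, update_eq_self]
      rw [hlast, hslot]
    · rw [hfj, hbad k (mem_erase.mp (mem_erase.mp hk).2).1 hku, mul_zero]
  unfold crossSum at h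
  rw [sum_congr rfl hterm, ← sum_filter, sum_const, nsmul_eq_mul, hfj, update_eq_self] at h
  generalize #{k ∈ (univ.erase (Fin.last n)).erase j | f k = f (Fin.last n)} = c at h
  refine eq_zero_of_natCast_mul_sq_eq_zero K (m := 4 * c + 8) (by omega) ?_
  push_cast
  linear_combination h

theorem map_eq_zero_of_eq_last (f : Fin (n + 1) → A) {j : Fin (n + 1)} (hj : j ≠ Fin.last n)
    (hfj : f j = f (Fin.last n)) : br f = 0 := by
  classical
  induction hm : #{k | f k ≠ f (Fin.last n)} using Nat.strong_induction_on generalizing f j with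
  | _ m ih =>
  refine map_eq_zero_of_forall_map_update_last hL hF f hj hfj fun k hk hku => ?_
  set g := update f k (f (Fin.last n))
  have hglast : g (Fin.last n) = f (Fin.last n) := update_of_ne hk.symm ..
  have hgj : g j = f j := update_of_ne (fun h : j = k => hku (h ▸ hfj)) ..
  have hfewer : #{i | g i ≠ g (Fin.last n)} < m := by
    have hfilter : ({i | g i ≠ g (Fin.last n)} : Finset _) =
        ({i | f i ≠ f (Fin.last n)} : Finset _).erase k := by
      ext i
      by_cases hi : i = k <;> simp [g, hi, hk.symm]
    rw [hfilter, ← hm]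
    exact card_erase_lt_of_mem (by simpa using hku)
  exact ih _ hfewer g (j := j) hj (hgj.trans (hfj.trans hglast.symm)) rfl

end NambuLoday

end MultilinearMap

/-- Main Theorem: A Nambu-Loday bracket (an `n`-linear bracket, here of
arity `n + 1`, satisfying the Leibniz rule in each argument and the Filippov identity) on
a commutative associative reduced algebra over a field of characteristic 0 vanishes
whenever two of its arguments are equal; in particular it is totally skew-symmetric. -/
theorem stmt7 {K A : Type*} [Field K] [CharZero K] [CommRing A] [Algebra K A] [IsReduced A]
    (n : ℕ) (br : MultilinearMap K (fun _ : Fin (n + 1) => A) A)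
    (hLeib : ∀ (f : Fin (n + 1) → A) (i : Fin (n + 1)) (x y : A),
      br (Function.update f i (x * y)) =
        x * br (Function.update f i y) + br (Function.update f i x) * y)
    (hFil : ∀ (f g : Fin (n + 1) → A),
      br (Function.update f (Fin.last n) (br g)) =
        ∑ k : Fin (n + 1),
          br (Function.update g k (br (Function.update f (Fin.last n) (g k))))) :
    (∀ (f : Fin (n + 1) → A) (i j : Fin (n + 1)), i ≠ j → f i = f j → br f = 0) ∧
      (∀ (f : Fin (n + 1) → A) (i j : Fin (n + 1)), i ≠ j →
        br (f ∘ Equiv.swap i j) = - br f) := by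
  let alt : AlternatingMap K A A (Fin (n + 1)) :=
    { br with
      map_eq_zero_of_eq' := fun _ _ _ hf hij =>
        br.map_eq_zero_of_eq_of_pivot (Fin.last n)
          (fun f _ hi hfi => MultilinearMap.map_eq_zero_of_eq_last hLeib hFil f hi hfi) hij hf }
  exact ⟨fun f _ _ hij hf => alt.map_eq_zero_of_eq f hf hij,
    fun f _ _ hij => alt.map_swap f hij⟩
end

section
/- Let A be a commutative associative reduced algebra over a field of characteristic 0 with an n-linear bracket satisfying the Leibniz rule in each argument and the Filippov identity. Suppose (inductive hypothesis S_m, for some m with 1 < m ≤ n-1) that {f_1,...,f_{n-1},h} = 0 whenever m of the elements f_1,...,f_{n-1} equal h. Then {f_1,...,f_{n-1},h} = 0 whenever m-1 of the elements f_1,...,f_{n-1} equal h. -/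
/-- inductive step: For a Nambu-Loday bracket of arity `n + 1` on a
commutative associative reduced algebra over a field of characteristic 0, if the bracket
`{f₁,…,fₙ,h}` vanishes whenever `m` of the first `n` arguments equal `h` (statement
`Sₘ`, for `1 < m ≤ n`), then it vanishes whenever `m - 1` of them equal `h`. -/
theorem stmt8 {K A : Type*} [Field K] [CharZero K] [CommRing A] [Algebra K A] [IsReduced A]
    (n : ℕ) (br : MultilinearMap K (fun _ : Fin (n + 1) => A) A)
    (hLeib : ∀ (f : Fin (n + 1) → A) (i : Fin (n + 1)) (x y : A),
      br (Function.update f i (x * y)) =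
        x * br (Function.update f i y) + br (Function.update f i x) * y)
    (hFil : ∀ (f g : Fin (n + 1) → A),
      br (Function.update f (Fin.last n) (br g)) =
        ∑ k : Fin (n + 1),
          br (Function.update g k (br (Function.update f (Fin.last n) (g k)))))
    (m : ℕ) (hm1 : 1 < m) (hmn : m ≤ n)
    (hSm : ∀ (f : Fin (n + 1) → A) (h : A) (I : Finset (Fin (n + 1))),
      I.card = m → Fin.last n ∉ I → (∀ i ∈ I, f i = h) → f (Fin.last n) = h → br f = 0) :
    ∀ (f : Fin (n + 1) → A) (h : A) (I : Finset (Fin (n + 1))),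
      I.card = m - 1 → Fin.last n ∉ I → (∀ i ∈ I, f i = h) → f (Fin.last n) = h →
        br f = 0 := by
  intro f h I hcard hLI hIh hfL0
  obtain ⟨i₀, hi₀⟩ : I.Nonempty := Finset.card_pos.mp (by rw [hcard]; omega)
  have hi₀L : i₀ ≠ Fin.last n := by rintro rfl; exact hLI hi₀
  have hfi₀ : f i₀ = h := hIh i₀ hi₀
  -- update f (last) h = f
  have hupf : Function.update f (Fin.last n) h = f := by
    have := Function.update_eq_self (Fin.last n) f
    rwa [hfL0] at this
  have hupdI : ∀ k ∈ I, Function.update f k h = f := by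
    intro k hk
    have := Function.update_eq_self k f
    rwa [hIh k hk] at this
  -- the derivation D x = {f₁,…,fₙ,x}
  set D : A → A := fun x => br (Function.update f (Fin.last n) x) with hDdef
  set P : A := br f with hPdef
  have hDh : D h = P := by simp only [hDdef]; rw [hupf]
  have hDmul : ∀ x y : A, D (x * y) = x * D y + D x * y := fun x y => hLeib f (Fin.last n) x y
  have hD0 : D (0 : A) = 0 := br.map_update_zero f (Fin.last n)
  -- instances of S_m
  have hSk : ∀ k : Fin (n+1), k ≠ Fin.last n → k ∉ I → br (Function.update f k h) = 0 := by
    intro k hkL hkI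
    refine hSm _ h (insert k I) ?_ ?_ ?_ ?_
    · rw [Finset.card_insert_of_notMem hkI, hcard]; omega
    · intro hmem
      rcases Finset.mem_insert.mp hmem with h1 | h1
      · exact hkL h1.symm
      · exact hLI h1
    · intro i hi
      rcases Finset.mem_insert.mp hi with rfl | hi'
      · exact Function.update_self i h f
      · rw [Function.update_of_ne (by rintro rfl; exact hkI hi')]
        exact hIh i hi'
    · rw [Function.update_of_ne (Ne.symm hkL)]; exact hfL0
  -- Step A : Σ = 0
  have hA : ∑ k ∈ Finset.univ.erase (Fin.last n), br (Function.update f k (D (f k))) = 0 := by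
    have h0 := hFil f f
    rw [← Finset.add_sum_erase Finset.univ _ (Finset.mem_univ (Fin.last n))] at h0
    rw [hfL0, hupf] at h0
    have h1 : br (Function.update f (Fin.last n) (br f)) + 0
        = br (Function.update f (Fin.last n) (br f))
          + ∑ k ∈ Finset.univ.erase (Fin.last n),
              br (Function.update f k (br (Function.update f (Fin.last n) (f k)))) := by
      rw [add_zero]; exact h0
    have h2 := (add_left_cancel h1).symm
    exact h2
  -- the modified tuple F
  set F : Fin (n+1) → A := Function.update f i₀ (h * h) with hFdef
  have hFL : F (Fin.last n) = h := by
    rw [hFdef, Function.update_of_ne (Ne.symm hi₀L)]; exact hfL0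
  have hFi₀ : F i₀ = h * h := Function.update_self i₀ (h*h) f
  have hFk : ∀ k, k ≠ i₀ → F k = f k := fun k hk => Function.update_of_ne hk (h*h) f
  -- key1 : brackets of F with a slot ≠ i₀ updated
  have key1 : ∀ (k : Fin (n+1)) (x : A), k ≠ i₀ →
      br (Function.update F k x)
        = h * br (Function.update f k x) + br (Function.update f k x) * h := by
    intro k x hk
    have h1 : Function.update F k x
        = Function.update (Function.update f k x) i₀ (h*h) := by
      rw [hFdef]; exact (Function.update_comm hk x (h*h) f).symm
    have h2 : Function.update (Function.update f k x) i₀ h = Function.update f k x := by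
      have e : (Function.update f k x) i₀ = h := by
        rw [Function.update_of_ne (Ne.symm hk)]; exact hfi₀
      have := Function.update_eq_self i₀ (Function.update f k x)
      rwa [e] at this
    rw [h1, hLeib _ i₀ h h, h2]
  have key2 : ∀ x : A, br (Function.update F i₀ x) = br (Function.update f i₀ x) := by
    intro x; rw [hFdef, Function.update_idem]
  -- D-hat
  have hDhat : ∀ x : A, br (Function.update F (Fin.last n) x) = h * D x + D x * h :=
    fun x => key1 (Fin.last n) x (Ne.symm hi₀L)
  have hbrF : br F = h * P + P * h := by
    have h1 := hLeib f i₀ h h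
    rw [hupdI i₀ hi₀] at h1
    rw [hFdef]; exact h1
  -- Step B per-term expansion
  have hB : ∀ k ∈ Finset.univ.erase (Fin.last n),
      br (Function.update F k (br (Function.update F (Fin.last n) (F k))))
        = 4*(h*(h* br (Function.update f k (D (f k)))))
          + (if k = i₀ then 8*(h*(P*P)) else if k ∈ I then 4*(h*(P*P)) else 0) := by
    intro k hk
    have hkL : k ≠ Fin.last n := Finset.ne_of_mem_erase hk
    by_cases hki : k = i₀
    · subst hki
      rw [if_pos rfl]
      have u_h : br (Function.update f k h) = P := by rw [hupdI k hi₀, ← hPdef]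
      have hDhh : D (h*h) = h*P + P*h := by rw [hDmul, hDh]
      rw [hFi₀, hDhat (h*h), hDhh, key2, hfi₀, hDh]
      set q : A := br (Function.update f k P) with hq
      have e1 : br (Function.update f k (h*P)) = h * q + P * P := by
        rw [hLeib f k h P, u_h]
      have e2 : br (Function.update f k (P*h)) = P * P + q * h := by
        rw [hLeib f k P h, u_h]
      have e3 : br (Function.update f k (h*P + P*h)) = h*q + P*P + (P*P + q*h) := by
        rw [br.map_update_add, e1, e2]
      have e4 : br (Function.update f k (h*(h*P + P*h)))
          = h * (h*q + P*P + (P*P + q*h)) + P * (h*P+P*h) := by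
        rw [hLeib f k h (h*P+P*h), e3, u_h]
      have e5 : br (Function.update f k ((h*P + P*h)*h))
          = (h*P+P*h) * P + (h*q + P*P + (P*P + q*h)) * h := by
        rw [hLeib f k (h*P+P*h) h, u_h, e3]
      rw [br.map_update_add, e4, e5]
      ring
    · rw [if_neg hki]
      by_cases hkI : k ∈ I
      · rw [if_pos hkI]
        have hfk : f k = h := hIh k hkI
        have u_h : br (Function.update f k h) = P := by rw [hupdI k hkI, ← hPdef]
        rw [hFk k hki, hfk, hDhat h, hDh]
        have e0 : br (Function.update F k h) = h * P + P * h := by rw [key1 k h hki, u_h]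
        set q : A := br (Function.update f k P) with hq
        have e1 : br (Function.update F k P) = h * q + q * h := key1 k P hki
        have e2 : br (Function.update F k (h*P)) = h * (h*q + q*h) + (h*P+P*h) * P := by
          rw [hLeib F k h P, e1, e0]
        have e3 : br (Function.update F k (P*h)) = P * (h*P+P*h) + (h*q+q*h) * h := by
          rw [hLeib F k P h, e0, e1]
        rw [br.map_update_add, e2, e3]
        ring
      · rw [if_neg hkI]
        have u0 : br (Function.update f k h) = 0 := hSk k hkL hkI
        have e00 : br (Function.update F k h) = 0 := by rw [key1 k h hki, u0]; ring
        rw [hFk k hki, hDhat (f k)]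
        set q : A := br (Function.update f k (D (f k))) with hq
        have e1 : br (Function.update F k (D (f k))) = h * q + q * h := key1 k (D (f k)) hki
        have e2 : br (Function.update F k (h * D (f k))) = h*(h*q+q*h) + 0 * D (f k) := by
          rw [hLeib F k h (D (f k)), e1, e00]
        have e3 : br (Function.update F k (D (f k) * h)) = D (f k) * 0 + (h*q+q*h)*h := by
          rw [hLeib F k (D (f k)) h, e00, e1]
        rw [br.map_update_add, e2, e3]
        ring
  -- Step B : the erased sum for F vanishes
  have hB0 : ∑ k ∈ Finset.univ.erase (Fin.last n),
      br (Function.update F k (br (Function.update F (Fin.last n) (F k)))) = 0 := by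
    have h0 := hFil F F
    rw [← Finset.add_sum_erase Finset.univ _ (Finset.mem_univ (Fin.last n))] at h0
    have hupF : Function.update F (Fin.last n) h = F := by
      have := Function.update_eq_self (Fin.last n) F
      rwa [hFL] at this
    rw [hFL, hupF] at h0
    have h1 : br (Function.update F (Fin.last n) (br F)) + 0
        = br (Function.update F (Fin.last n) (br F))
          + ∑ k ∈ Finset.univ.erase (Fin.last n),
              br (Function.update F k (br (Function.update F (Fin.last n) (F k)))) := by
      rw [add_zero]; exact h0
    exact (add_left_cancel h1).symm
  -- assemble : 0 = 4m • (h P²)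
  have hC0 : (0:A) = ∑ k ∈ Finset.univ.erase (Fin.last n),
      (4*(h*(h* br (Function.update f k (D (f k)))))
        + (if k = i₀ then 8*(h*(P*P)) else if k ∈ I then 4*(h*(P*P)) else 0)) := by
    calc (0:A) = ∑ k ∈ Finset.univ.erase (Fin.last n),
        br (Function.update F k (br (Function.update F (Fin.last n) (F k)))) := hB0.symm
    _ = _ := Finset.sum_congr rfl hB
  rw [Finset.sum_add_distrib] at hC0
  have hs1 : ∑ k ∈ Finset.univ.erase (Fin.last n),
      4*(h*(h* br (Function.update f k (D (f k))))) = 0 := by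
    have hcg : ∀ k ∈ Finset.univ.erase (Fin.last n),
        4*(h*(h* br (Function.update f k (D (f k)))))
          = (4*(h*h)) * br (Function.update f k (D (f k))) := fun k _ => by ring
    rw [Finset.sum_congr rfl hcg, ← Finset.mul_sum, hA, mul_zero]
  have hIsub : I ⊆ Finset.univ.erase (Fin.last n) := fun x hx =>
    Finset.mem_erase.mpr ⟨by rintro rfl; exact hLI hx, Finset.mem_univ x⟩
  have hs2 : ∑ k ∈ Finset.univ.erase (Fin.last n),
      (if k = i₀ then 8*(h*(P*P)) else if k ∈ I then 4*(h*(P*P)) else 0)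
        = 8*(h*(P*P)) + (m - 2) • (4*(h*(P*P))) := by
    rw [← Finset.sum_subset hIsub (fun x _ hxI => by
      rw [if_neg (by rintro rfl; exact hxI hi₀), if_neg hxI])]
    rw [← Finset.add_sum_erase I _ hi₀, if_pos rfl]
    congr 1
    rw [Finset.sum_congr rfl (fun x hx => by
      rw [if_neg (Finset.ne_of_mem_erase hx), if_pos (Finset.mem_of_mem_erase hx)]),
      Finset.sum_const, Finset.card_erase_of_mem hi₀, hcard,
      show m - 1 - 1 = m - 2 from by omega]
  rw [hs1, hs2] at hC0
  -- clear the scalar 4m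
  have hm2 : (2:ℕ) ≤ m := hm1
  have heq : (0:A) = 8*(h*(P*P)) + ((m:A)-2)*(4*(h*(P*P))) := by
    have h1 : (m - 2) • (4*(h*(P*P))) = ((m-2 : ℕ) : A) * (4*(h*(P*P))) := nsmul_eq_mul _ _
    have h2 : ((m - 2 : ℕ) : A) = (m : A) - 2 := by
      push_cast [Nat.cast_sub hm2]; ring
    rw [h1, h2] at hC0
    rw [hC0]; ring
  have hkey : algebraMap K A ((4*m : ℕ) : K) * (h*(P*P)) = 0 := by
    rw [map_natCast]
    push_cast
    linear_combination -heq
  have hκ : ((4*m : ℕ) : K) ≠ 0 := Nat.cast_ne_zero.mpr (by omega)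
  have hC : h * (P*P) = 0 := by
    calc h*(P*P) = algebraMap K A ((((4*m:ℕ):K))⁻¹ * ((4*m:ℕ):K)) * (h*(P*P)) := by
          rw [inv_mul_cancel₀ hκ, map_one, one_mul]
    _ = algebraMap K A (((4*m:ℕ):K))⁻¹ * (algebraMap K A ((4*m:ℕ):K) * (h*(P*P))) := by
          rw [map_mul, mul_assoc]
    _ = 0 := by rw [hkey, mul_zero]
  -- h·P = 0 by reducedness
  have hhP : h * P = 0 := by
    have hnil : (h*P)^2 = 0 := by linear_combination h * hC
    exact IsNilpotent.eq_zero ⟨2, hnil⟩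
  -- P² = -h·(D P)
  have h5 : h * D P + P * P = 0 := by
    have h1 := hDmul h P
    rw [hDh, hhP, hD0] at h1
    exact h1.symm
  have h6 : P ^ 3 = 0 := by linear_combination P * h5 - (D P) * hhP
  exact IsNilpotent.eq_zero ⟨3, h6⟩
end

section
/- Any Poisson-Loday bracket on a commutative reduced algebra over a field of characteristic 0 is a Poisson bracket: a bilinear bracket satisfying the Leibniz rule in each argument and the identity {f,{g,h}} = {{f,g},h} + {g,{f,h}} is automatically skew-symmetric, hence also satisfies {{f,g},h} + {{g,h},f} + {{h,f},g} = 0. -/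
/-- Any Poisson-Loday bracket on a commutative reduced algebra over a
field of characteristic 0, satisfying the Leibniz rule in each argument and the Loday-type
Jacobi identity, satisfies `{h,h} = 0` for all `h` and is skew-symmetric. -/
theorem stmt9 {K A : Type*} [Field K] [CharZero K] [CommRing A] [Algebra K A] [IsReduced A]
    (br : A →ₗ[K] A →ₗ[K] A)
    (hL1 : ∀ f g h : A, br (f * g) h = f * br g h + br f h * g)
    (hL2 : ∀ f g h : A, br f (g * h) = g * br f h + br f g * h)
    (hJ : ∀ f g h : A, br f (br g h) = br (br f g) h + br g (br f h)) :
    (∀ f g : A, br f g = - br g f) ∧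
      (∀ f g h : A, br (br f g) h + br (br g h) f + br (br h f) g = 0) := by
  have key : ∀ f : A, br f f = 0 := by
    intro f
    have hq0 : ∀ h : A, br (br f f) h = 0 := by
      intro h
      linear_combination -(hJ f f h)
    have main := hJ (f * f) f f
    rw [hL1 f f f] at main
    simp only [map_add, LinearMap.add_apply, hL1, hL2, hq0] at main
    -- derive 4 • q² = 0
    have h4 : (4 : K) • (br f f * br f f) = 0 := by
      have e : (4 : K) • (br f f * br f f)
          = br f f * br f f + br f f * br f f + br f f * br f f + br f f * br f f := by
        rw [show (4 : K) = 1 + 1 + 1 + 1 by norm_num]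
        simp [add_smul]
      rw [e]
      linear_combination -main
    have hsq : br f f * br f f = 0 := by
      have h2 := congrArg (fun x => (4 : K)⁻¹ • x) h4
      simpa [smul_smul, inv_mul_cancel₀ (show (4 : K) ≠ 0 by norm_num)] using h2
    have : IsNilpotent (br f f) := ⟨2, by rw [sq]; exact hsq⟩
    exact this.eq_zero
  have skew : ∀ f g : A, br f g = - br g f := by
    intro f g
    have h1 := key (f + g)
    simp only [map_add, LinearMap.add_apply, key f, key g] at h1
    linear_combination h1
  refine ⟨skew, ?_⟩
  intro f g h
  have e2 : br (br g h) f = - br f (br g h) := skew _ _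
  have e3 : br (br h f) g = - br g (br h f) := skew _ _
  have e4 : br g (br f h) = - br g (br h f) := by rw [skew f h, map_neg]
  linear_combination e2 + e3 - e4 - hJ f g h
end

section
/- For any Loday algebroid bracket on a vector bundle E over a manifold M, at any point p ∈ M where the right anchor a_r does not vanish, the left anchor equals the right anchor in a neighborhood of p and the bracket is skew-symmetric ([X,X] = 0 for all sections X) in that neighborhood. -/
/-!
Write `s = a_r(Y) f`. Scaling one entry of the Jacobi identity by a function and expanding
with the Leibniz rule shows that `s · (a_l X u - a_r X u)` annihilates every section;
applying `a_r(·) f` to its product with `Y` gives `s² (a_l X - a_r X) = 0` in the function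
algebra, and applying the derivation `a_r(Y)` once more gives
`s³ · a_r(Y)(a_l X f - a_r X f) = 0`. With these, the symmetrised bracket `[X,X] + [X,X]`,
which the scaled Jacobi identity expresses through anchor terms, is killed by `s⁴`.
Everything is algebra over an arbitrary commutative algebra; one only evaluates at the end,
on the open set where `s` does not vanish.
-/

open scoped Manifold

/-- A Loday algebroid on the module `A` of sections over the function algebra `R`. -/
structure IsLodayAlgebroid {k R A : Type*} [CommRing k] [CommRing R] [Algebra k R]
    [AddCommGroup A] [Module k A] [Module R A]
    (br : A →ₗ[k] A →ₗ[k] A) (al ar : A →ₗ[R] Derivation k R R) : Prop where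
  leibniz : ∀ (f g : R) (X Y : A),
    br (f • X) (g • Y) = (f * g) • br X Y + (f * al X g) • Y - (g * ar Y f) • X
  jacobi : ∀ X Y Z : A, br X (br Y Z) = br (br X Y) Z + br Y (br X Z)

theorem Derivation.pow_three_mul_eq_zero_of_sq_mul_eq_zero {k R : Type*} [CommRing k]
    [CommRing R] [Algebra k R] (D : Derivation k R R) {s d : R} (h : s ^ 2 * d = 0) :
    s ^ 3 * D d = 0 := by
  have hD : D (s ^ 2 * d) = 0 := by rw [h, map_zero]
  rw [Derivation.leibniz, Derivation.leibniz_pow, smul_eq_mul, smul_eq_mul, smul_eq_mul] at hD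
  linear_combination s * hD - (2 * D s) * h

namespace IsLodayAlgebroid

variable {k R A : Type*} [CommRing k] [CommRing R] [Algebra k R]
  [AddCommGroup A] [Module k A] [Module R A]
  {br : A →ₗ[k] A →ₗ[k] A} {al ar : A →ₗ[R] Derivation k R R}

theorem smul_left (h : IsLodayAlgebroid br al ar) (f : R) (X Z : A) :
    br (f • X) Z = f • br X Z - ar Z f • X := by
  simpa using h.leibniz f 1 X Z

theorem smul_right (h : IsLodayAlgebroid br al ar) (X : A) (g : R) (Z : A) :
    br X (g • Z) = g • br X Z + al X g • Z := by
  simpa using h.leibniz 1 g X Z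

/-- Jacobi identity with its first entry scaled by `f`. -/
theorem smul_bracket_add_bracket_swap (h : IsLodayAlgebroid br al ar) (f : R) (X Y Z : A) :
    ar Z f • (br X Y + br Y X) = (al Y f - ar Y f) • br X Z
      + (ar Z (ar Y f) - al Y (ar Z f) + ar (br Y Z) f) • X := by
  have hJ := h.jacobi (f • X) Y Z
  simp only [h.smul_left, h.smul_right, map_sub, LinearMap.sub_apply,
    sub_smul, add_smul, smul_add] at hJ ⊢
  linear_combination (norm := module) hJ - f • h.jacobi X Y Z

theorem mul_anchor_sub_smul_eq_zero (h : IsLodayAlgebroid br al ar) (f u : R) (X Z W : A) :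
    (ar Z f * (al X u - ar X u)) • W = 0 := by
  have hW := h.smul_bracket_add_bracket_swap f X (u • W) Z
  simp only [h.smul_left, h.smul_right, map_sub, map_smul, Derivation.coe_smul,
    Derivation.leibniz, Derivation.coe_sub, Pi.sub_apply, Pi.smul_apply,
    smul_eq_mul, sub_smul, add_smul, smul_sub, smul_add, mul_smul] at hW
  linear_combination (norm := module) hW - u • h.smul_bracket_add_bracket_swap f X W Z

/-- Jacobi identity with its middle entry scaled by `g`. -/
theorem anchor_bracket_smul_eq_zero (h : IsLodayAlgebroid br al ar) (g : R) (X Z W : A) :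
    (ar (br X Z) g + ar Z (al X g) - al X (ar Z g)) • W = 0 := by
  have hJ := h.jacobi X (g • W) Z
  simp only [h.smul_left, h.smul_right, map_sub, map_add, LinearMap.add_apply] at hJ
  linear_combination (norm := module) hJ - g • h.jacobi X W Z

theorem sq_mul_anchor_sub_eq_zero (h : IsLodayAlgebroid br al ar) (f u : R) (X Y : A) :
    ar Y f ^ 2 * (al X u - ar X u) = 0 := by
  have h0 := congrArg (fun W => ar W f) (h.mul_anchor_sub_smul_eq_zero f u X Y Y)
  simp only [map_smul, map_zero, Derivation.smul_apply, Derivation.zero_apply, smul_eq_mul] at h0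
  linear_combination h0

theorem pow_four_smul_bracket_self (h : IsLodayAlgebroid br al ar) (f : R) (X Y : A) :
    ar Y f ^ 4 • (br X X + br X X) = 0 := by
  have hd := h.sq_mul_anchor_sub_eq_zero f f X Y
  have hDd := (ar Y).pow_three_mul_eq_zero_of_sq_mul_eq_zero hd
  have he := congrArg (fun W => ar W f) (h.anchor_bracket_smul_eq_zero f X Y Y)
  simp only [map_smul, map_zero, Derivation.smul_apply, Derivation.zero_apply, smul_eq_mul] at he
  rw [map_sub] at hDd
  have hd3 : ar Y f ^ 3 * (al X f - ar X f) = 0 := by linear_combination ar Y f * hd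
  have hc3 : ar Y f ^ 3 * (ar Y (ar X f) - al X (ar Y f) + ar (br X Y) f) = 0 := by
    linear_combination ar Y f ^ 2 * he - hDd
  rw [pow_succ, mul_smul, h.smul_bracket_add_bracket_swap, smul_add, smul_smul, smul_smul,
    hd3, hc3, zero_smul, zero_smul, add_zero]

end IsLodayAlgebroid

theorem stmt13_general {E H M : Type*} [NormedAddCommGroup E] [NormedSpace ℝ E] [TopologicalSpace H]
    (I : ModelWithCorners ℝ E H) [TopologicalSpace M] [ChartedSpace H M]
    {A : Type*} [AddCommGroup A] [Module ℝ A] [Module C^(⊤ : ℕ∞)⟮I, M; ℝ⟯ A]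
    (V : M → Type*) [∀ p, AddCommGroup (V p)] [∀ p, Module ℝ (V p)]
    (ev : ∀ p : M, A →ₗ[ℝ] V p)
    (hev : ∀ (p : M) (f : C^(⊤ : ℕ∞)⟮I, M; ℝ⟯) (X : A), ev p (f • X) = f p • ev p X)
    (br : A →ₗ[ℝ] A →ₗ[ℝ] A)
    (al ar : A →ₗ[C^(⊤ : ℕ∞)⟮I, M; ℝ⟯] Derivation ℝ C^(⊤ : ℕ∞)⟮I, M; ℝ⟯ C^(⊤ : ℕ∞)⟮I, M; ℝ⟯)
    (hanchor : ∀ (f g : C^(⊤ : ℕ∞)⟮I, M; ℝ⟯) (X Y : A),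
      br (f • X) (g • Y) = (f * g) • br X Y + (f * al X g) • Y - (g * ar Y f) • X)
    (hJ : ∀ X Y Z : A, br X (br Y Z) = br (br X Y) Z + br Y (br X Z))
    (p : M) (Y : A) (f : C^(⊤ : ℕ∞)⟮I, M; ℝ⟯) (hp : ar Y f p ≠ 0) :
    ∃ U ∈ nhds p,
      (∀ (X : A) (g : C^(⊤ : ℕ∞)⟮I, M; ℝ⟯), ∀ q ∈ U, al X g q = ar X g q) ∧
      (∀ X : A, ∀ q ∈ U, ev q (br X X) = 0) := by
  have h : IsLodayAlgebroid br al ar := ⟨hanchor, hJ⟩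
  have hU : IsOpen {q | ar Y f q ≠ 0} :=
    isOpen_compl_singleton.preimage (ar Y f).contMDiff.continuous
  refine ⟨{q | ar Y f q ≠ 0}, hU.mem_nhds hp, fun X g q hq => ?_, fun X q hq => ?_⟩
  · have hq' := congrArg (· q) (h.sq_mul_anchor_sub_eq_zero f g X Y)
    simp only [ContMDiffMap.coe_mul, ContMDiffMap.coe_pow, ContMDiffMap.coe_sub, Pi.mul_apply,
      Pi.pow_apply, Pi.sub_apply, ContMDiffMap.coe_zero, Pi.zero_apply] at hq'
    exact sub_eq_zero.1 ((mul_eq_zero.1 hq').resolve_left (pow_ne_zero 2 hq))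
  · have hq' := congrArg (ev q) (h.pow_four_smul_bracket_self f X Y)
    rw [hev, map_add, map_zero, ← two_smul ℝ, ContMDiffMap.coe_pow, Pi.pow_apply] at hq'
    exact (smul_eq_zero.1 ((smul_eq_zero.1 hq').resolve_left (pow_ne_zero 4 hq))).resolve_left
      two_ne_zero

/-- For a Loday algebroid bracket on (the module of sections of) a vector
bundle over a manifold `M` (with pointwise evaluation `ev p` into the fibres `V p`), at
any point `p` where the right anchor does not vanish, there is a neighbourhood of `p` on
which the left anchor equals the right anchor and on which the bracket is skew-symmetric
(`[X,X]` vanishes there for every section `X`). -/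
theorem stmt13 {E H M : Type*} [NormedAddCommGroup E] [NormedSpace ℝ E] [TopologicalSpace H]
    (I : ModelWithCorners ℝ E H) [TopologicalSpace M] [ChartedSpace H M]
    [IsManifold I (⊤ : ℕ∞) M]
    {A : Type*} [AddCommGroup A] [Module ℝ A] [Module C^(⊤ : ℕ∞)⟮I, M; ℝ⟯ A]
    [IsScalarTower ℝ C^(⊤ : ℕ∞)⟮I, M; ℝ⟯ A]
    (V : M → Type*) [∀ p, AddCommGroup (V p)] [∀ p, Module ℝ (V p)]
    (ev : ∀ p : M, A →ₗ[ℝ] V p)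
    (hev : ∀ (p : M) (f : C^(⊤ : ℕ∞)⟮I, M; ℝ⟯) (X : A), ev p (f • X) = f p • ev p X)
    (br : A →ₗ[ℝ] A →ₗ[ℝ] A)
    (al ar : A →ₗ[C^(⊤ : ℕ∞)⟮I, M; ℝ⟯] Derivation ℝ C^(⊤ : ℕ∞)⟮I, M; ℝ⟯ C^(⊤ : ℕ∞)⟮I, M; ℝ⟯)
    (hanchor : ∀ (f g : C^(⊤ : ℕ∞)⟮I, M; ℝ⟯) (X Y : A),
      br (f • X) (g • Y) = (f * g) • br X Y + (f * al X g) • Y - (g * ar Y f) • X)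
    (hJ : ∀ X Y Z : A, br X (br Y Z) = br (br X Y) Z + br Y (br X Z))
    (p : M) (Y : A) (f : C^(⊤ : ℕ∞)⟮I, M; ℝ⟯) (hp : ar Y f p ≠ 0) :
    ∃ U ∈ nhds p,
      (∀ (X : A) (g : C^(⊤ : ℕ∞)⟮I, M; ℝ⟯), ∀ q ∈ U, al X g q = ar X g q) ∧
      (∀ X : A, ∀ q ∈ U, ev q (br X X) = 0) :=
  stmt13_general I V ev hev br al ar hanchor hJ p Y f hp
end
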